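/- arXiv:1911.10302 — 2 statements merged into one kernel-verified Lean document; each statement's English description precedes it below -/
import Mathlib

section
/- Let K be a Killing field on ℝ³ and let (u,p) be a smooth solution of the incompressible Euler equations on I × ℝ³ such that u is axisymmetric: [K, u(t,·)] = 0 for every t ∈ I. Then for every t ∈ I the function x ↦ ⟨∇ₓp(t,x), K(x)⟩ is constant on ℝ³. -/
noncomputable section

/-- Vectors in ℝ³. -/
abbrev V3 : Type := Fin 3 → ℝ

/-- Euclidean inner product on ℝ³. -/
def dot3 (u v : V3) : ℝ := ∑ i, u i * v i

/-- Cross product on ℝ³. -/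
def cross3 (u v : V3) : V3 :=
  ![u 1 * v 2 - u 2 * v 1, u 2 * v 0 - u 0 * v 2, u 0 * v 1 - u 1 * v 0]

/-- Partial derivative ∂ᵢ of a scalar function. -/
def pd (i : Fin 3) (f : V3 → ℝ) (x : V3) : ℝ := fderiv ℝ f x (Pi.single i 1)

/-- Gradient of a scalar function. -/
def grad3 (f : V3 → ℝ) (x : V3) : V3 := fun i => pd i f x

/-- Divergence of a vector field. -/
def div3 (X : V3 → V3) (x : V3) : ℝ := ∑ i, fderiv ℝ X x (Pi.single i 1) i

/-- Curl of a vector field. -/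
def curl3 (X : V3 → V3) (x : V3) : V3 :=
  ![pd 1 (fun y => X y 2) x - pd 2 (fun y => X y 1) x,
    pd 2 (fun y => X y 0) x - pd 0 (fun y => X y 2) x,
    pd 0 (fun y => X y 1) x - pd 1 (fun y => X y 0) x]

/-- Lie bracket of vector fields: [X,Y](x) = DY(x)X(x) − DX(x)Y(x). -/
def bracket3 (X Y : V3 → V3) (x : V3) : V3 := fderiv ℝ Y x (X x) - fderiv ℝ X x (Y x)

/-- `K` is a Killing field of the Euclidean metric on `U`: `DK(x)` is antisymmetric on `U`. -/
def IsKillingOn (K : V3 → V3) (U : Set V3) : Prop :=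
  ∀ x ∈ U, ∀ v w : V3, dot3 (fderiv ℝ K x v) w + dot3 v (fderiv ℝ K x w) = 0

/-- `(u,p)` solves the incompressible Euler equations on `I × ℝ³`:
∂ₜu + (Dₓu)u = −∇ₓp and divₓ u = 0. -/
def IsEulerSolution (I : Set ℝ) (u : ℝ → V3 → V3) (p : ℝ → V3 → ℝ) : Prop :=
  (∀ t ∈ I, ∀ x : V3, deriv (fun s => u s x) t + fderiv ℝ (u t) x (u t x)
      = -grad3 (p t) x) ∧
  (∀ t ∈ I, ∀ x : V3, div3 (u t) x = 0)

/-!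
Differentiating the Killing equation shows that the trilinear form `⟨D²K(x)(a, b), c⟩` is
symmetric in `(a, b)` and antisymmetric in `(b, c)`, hence zero: `K` is affine with
antisymmetric linear part `A`.
For such `K`, the condition `[K, X] = 0` reads `DX · K = A X`; it is preserved by `∂ₜ`
(mixed partials commute) and by `(X, Y) ↦ (DX) Y` (differentiate `DX · K = A X` once more),
so the Euler equation gives `[K, ∇p] = 0`. Finally, as the Hessian is symmetric and `DK`
antisymmetric, `∇⟨∇p, K⟩ = [K, ∇p]`.
-/

open ContinuousLinearMap

lemma dot3_comm (u v : V3) : dot3 u v = dot3 v u := dotProduct_comm u v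

lemma dot3_sub_left (a b v : V3) : dot3 (a - b) v = dot3 a v - dot3 b v := sub_dotProduct a b v

lemma dot3_single_one (a : V3) (j : Fin 3) : dot3 a (Pi.single j 1) = a j := by
  simp [dot3, Pi.single_apply]

lemma dot3_map_single_one (L : V3 →L[ℝ] ℝ) (w : V3) :
    dot3 (fun i => L (Pi.single i 1)) w = L w := by
  rw [← L.coe_coe, LinearMap.pi_apply_eq_sum_univ L.toLinearMap w]
  refine Finset.sum_congr rfl fun i _ => ?_
  have hsingle : (fun j => if i = j then (1 : ℝ) else 0) = Pi.single i 1 := by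
    ext j; simp [Pi.single_apply, eq_comm]
  rw [hsingle, mul_comm, smul_eq_mul]

def dot3CLM (a : V3) : V3 →L[ℝ] ℝ := LinearMap.toContinuousLinearMap (dotProductEquiv ℝ (Fin 3) a)

@[simp] lemma dot3CLM_apply (a v : V3) : dot3CLM a v = dot3 a v := rfl

lemma HasFDerivAt.eq_zero_of_forall_eq_zero {E F : Type*} [NormedAddCommGroup E]
    [NormedSpace ℝ E] [NormedAddCommGroup F] [NormedSpace ℝ F] {g : E → F} {g' : E →L[ℝ] F}
    {x : E} (hg : HasFDerivAt g g' x) (h : ∀ y, g y = 0) : g' = 0 := by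
  rw [show g = fun _ => 0 from funext h] at hg
  exact hg.unique (hasFDerivAt_const 0 x)

lemma eq_zero_of_symm_of_antisymm {α : Type*} (T : α → α → α → ℝ)
    (hsymm : ∀ a b c, T a b c = T b a c) (hanti : ∀ a b c, T a b c = -T a c b) (a b c : α) :
    T a b c = 0 := by
  -- alternating the two rules cycles through all six orderings and returns `-T a b c`
  have h := hanti a b c
  rw [hsymm a c b, hanti c a b, hsymm c b a, hanti b c a, hsymm b a c] at h
  linarith

lemma IsKillingOn.dot3_fderiv_fderiv_add {K : V3 → V3} (hK : ContDiff ℝ 2 K)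
    (hKill : IsKillingOn K Set.univ) (x v w k : V3) :
    dot3 (fderiv ℝ (fderiv ℝ K) x v w) k + dot3 w (fderiv ℝ (fderiv ℝ K) x v k) = 0 := by
  let Φ : (V3 →L[ℝ] V3) →L[ℝ] ℝ :=
    (dot3CLM k).comp (apply ℝ V3 w) + (dot3CLM w).comp (apply ℝ V3 k)
  have hΦ : ∀ y, Φ (fderiv ℝ K y) = 0 := fun y => by
    simpa [Φ, dot3_comm k] using hKill y trivial w k
  have hDK : HasFDerivAt (fderiv ℝ K) (fderiv ℝ (fderiv ℝ K) x) x :=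
    ((hK.fderiv_right (m := 1) le_rfl).differentiable one_ne_zero x).hasFDerivAt
  have h := congrArg (· v) ((Φ.hasFDerivAt.comp x hDK).eq_zero_of_forall_eq_zero hΦ)
  simpa [Φ, dot3_comm k] using h

lemma IsKillingOn.fderiv_fderiv_eq_zero {K : V3 → V3} (hK : ContDiff ℝ 2 K)
    (hKill : IsKillingOn K Set.univ) (x : V3) : fderiv ℝ (fderiv ℝ K) x = 0 := by
  set T : V3 → V3 → V3 → ℝ := fun a b c => dot3 (fderiv ℝ (fderiv ℝ K) x a b) c
  have hsymm : ∀ a b c, T a b c = T b a c := fun a b c => by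
    simp only [T, (hK.contDiffAt.isSymmSndFDerivAt (by simp)).eq a b]
  have hanti : ∀ a b c, T a b c = -T a c b := fun a b c => by
    simp only [T]
    linarith [hKill.dot3_fderiv_fderiv_add hK x a b c,
      dot3_comm b (fderiv ℝ (fderiv ℝ K) x a c)]
  ext v w j
  simpa [T, dot3_single_one] using eq_zero_of_symm_of_antisymm T hsymm hanti v w (Pi.single j 1)

lemma IsKillingOn.hasFDerivAt_fderiv_zero {K : V3 → V3} (hK : ContDiff ℝ 2 K)
    (hKill : IsKillingOn K Set.univ) (x : V3) : HasFDerivAt K (fderiv ℝ K 0) x := by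
  have hDK : Differentiable ℝ (fderiv ℝ K) :=
    (hK.fderiv_right (m := 1) le_rfl).differentiable one_ne_zero
  rw [← is_const_of_fderiv_eq_zero hDK (hKill.fderiv_fderiv_eq_zero hK) x]
  exact (hK.differentiable two_ne_zero x).hasFDerivAt

section Slices

variable {E F : Type*} [NormedAddCommGroup E] [NormedSpace ℝ E] [NormedAddCommGroup F]
  [NormedSpace ℝ F]

lemma HasFDerivAt.hasDerivAt_prodMk_const {G : ℝ × E → F} {G' : ℝ × E →L[ℝ] F} {s : ℝ}
    {y : E} (hG : HasFDerivAt G G' (s, y)) : HasDerivAt (fun r => G (r, y)) (G' (1, 0)) s :=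
  hG.comp_hasDerivAt s ((hasDerivAt_id s).prodMk (hasDerivAt_const s y))

variable {I : Set ℝ} {u : ℝ → E → F} {s : ℝ}

lemma ContDiffOn.contDiff_slice {n : WithTop ℕ∞}
    (hu : ContDiffOn ℝ n (Function.uncurry u) (I ×ˢ Set.univ)) (hs : s ∈ I) :
    ContDiff ℝ n (u s) := by
  rw [← contDiffOn_univ]
  exact hu.comp (contDiff_const.prodMk contDiff_id).contDiffOn fun _ _ => ⟨hs, trivial⟩

lemma ContDiffOn.hasFDerivAt_uncurry (hI : IsOpen I)
    (hu : ContDiffOn ℝ 2 (Function.uncurry u) (I ×ˢ Set.univ)) (hs : s ∈ I) (y : E) :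
    HasFDerivAt (Function.uncurry u) (fderiv ℝ (Function.uncurry u) (s, y)) (s, y) :=
  ((hu.contDiffAt ((hI.prod isOpen_univ).mem_nhds ⟨hs, trivial⟩)).differentiableAt
    two_ne_zero).hasFDerivAt

lemma ContDiffOn.hasFDerivAt_fderiv_uncurry (hI : IsOpen I)
    (hu : ContDiffOn ℝ 2 (Function.uncurry u) (I ×ˢ Set.univ)) (hs : s ∈ I) (y : E) :
    HasFDerivAt (fderiv ℝ (Function.uncurry u))
      (fderiv ℝ (fderiv ℝ (Function.uncurry u)) (s, y)) (s, y) :=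
  (((hu.contDiffAt ((hI.prod isOpen_univ).mem_nhds ⟨hs, trivial⟩)).fderiv_right
    (m := 1) le_rfl).differentiableAt one_ne_zero).hasFDerivAt

lemma ContDiffOn.fderiv_slice_apply (hI : IsOpen I)
    (hu : ContDiffOn ℝ 2 (Function.uncurry u) (I ×ˢ Set.univ)) (hs : s ∈ I) (y w : E) :
    fderiv ℝ (u s) y w = fderiv ℝ (Function.uncurry u) (s, y) (0, w) := by
  have h : HasFDerivAt (u s) ((fderiv ℝ (Function.uncurry u) (s, y)).comp (inr ℝ ℝ E)) y :=
    (hu.hasFDerivAt_uncurry hI hs y).comp y (hasFDerivAt_prodMk_right s y)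
  rw [h.fderiv]
  rfl

lemma ContDiffOn.hasDerivAt_slice (hI : IsOpen I)
    (hu : ContDiffOn ℝ 2 (Function.uncurry u) (I ×ˢ Set.univ)) (hs : s ∈ I) (y : E) :
    HasDerivAt (fun r => u r y) (fderiv ℝ (Function.uncurry u) (s, y) (1, 0)) s :=
  (hu.hasFDerivAt_uncurry hI hs y).hasDerivAt_prodMk_const

lemma ContDiffOn.hasFDerivAt_deriv_slice (hI : IsOpen I)
    (hu : ContDiffOn ℝ 2 (Function.uncurry u) (I ×ˢ Set.univ)) (hs : s ∈ I) (y : E) :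
    HasFDerivAt (fun z => deriv (fun r => u r z) s)
      ((apply ℝ F ((1 : ℝ), (0 : E))).comp
        ((fderiv ℝ (fderiv ℝ (Function.uncurry u)) (s, y)).comp (inr ℝ ℝ E))) y := by
  have hderiv : (fun z => deriv (fun r => u r z) s) =
      fun z => fderiv ℝ (Function.uncurry u) (s, z) (1, 0) :=
    funext fun z => (hu.hasDerivAt_slice hI hs z).deriv
  rw [hderiv]
  exact (apply ℝ F ((1 : ℝ), (0 : E))).hasFDerivAt.comp y
    ((hu.hasFDerivAt_fderiv_uncurry hI hs y).comp y (hasFDerivAt_prodMk_right s y))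

end Slices

lemma bracket3_add {K X Y : V3 → V3} {x : V3} (hX : DifferentiableAt ℝ X x)
    (hY : DifferentiableAt ℝ Y x) :
    bracket3 K (fun y => X y + Y y) x = bracket3 K X x + bracket3 K Y x := by
  simp only [bracket3, fderiv_fun_add hX hY, add_apply, map_add]
  abel

lemma bracket3_neg {K X : V3 → V3} {x : V3} :
    bracket3 K (fun y => -X y) x = -bracket3 K X x := by
  simp only [bracket3, fderiv_fun_neg, neg_apply, map_neg]
  abel

section AffineField

variable {K : V3 → V3} {A : V3 →L[ℝ] V3}

lemma bracket3_eq_zero_iff (hK : ∀ x, HasFDerivAt K A x) {X : V3 → V3} {x : V3} :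
    bracket3 K X x = 0 ↔ fderiv ℝ X x (K x) = A (X x) := by
  rw [bracket3, (hK x).fderiv, sub_eq_zero]

lemma fderiv_fderiv_apply_of_bracket3_eq_zero (hK : ∀ x, HasFDerivAt K A x) {X : V3 → V3}
    (hX : ContDiff ℝ 2 X) (hXK : ∀ x, bracket3 K X x = 0) (x v : V3) :
    fderiv ℝ (fderiv ℝ X) x v (K x) = A (fderiv ℝ X x v) - fderiv ℝ X x (A v) := by
  have hDX : HasFDerivAt (fderiv ℝ X) (fderiv ℝ (fderiv ℝ X) x) x :=
    ((hX.fderiv_right (m := 1) le_rfl).differentiable one_ne_zero x).hasFDerivAt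
  have hderiv := (hDX.clm_apply (hK x)).sub
    (A.hasFDerivAt.comp x (hX.differentiable two_ne_zero x).hasFDerivAt)
  have h := congrArg (· v) (hderiv.eq_zero_of_forall_eq_zero
    fun y => sub_eq_zero.2 ((bracket3_eq_zero_iff hK).1 (hXK y)))
  simp only [sub_apply, add_apply, comp_apply, flip_apply, zero_apply] at h
  rw [← sub_eq_zero, ← h]
  abel

lemma bracket3_fderiv_apply_eq_zero (hK : ∀ x, HasFDerivAt K A x) {X Y : V3 → V3}
    (hX : ContDiff ℝ 2 X) (hY : Differentiable ℝ Y) (hXK : ∀ x, bracket3 K X x = 0)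
    (hYK : ∀ x, bracket3 K Y x = 0) (x : V3) :
    bracket3 K (fun y => fderiv ℝ X y (Y y)) x = 0 := by
  have hDX : HasFDerivAt (fderiv ℝ X) (fderiv ℝ (fderiv ℝ X) x) x :=
    ((hX.fderiv_right (m := 1) le_rfl).differentiable one_ne_zero x).hasFDerivAt
  rw [bracket3_eq_zero_iff hK, (hDX.clm_apply (hY x).hasFDerivAt).fderiv]
  simp only [add_apply, comp_apply, flip_apply]
  rw [(bracket3_eq_zero_iff hK).1 (hYK x), (hX.contDiffAt.isSymmSndFDerivAt (by simp)).eq,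
    fderiv_fderiv_apply_of_bracket3_eq_zero hK hX hXK]
  abel

lemma bracket3_deriv_eq_zero (hK : ∀ x, HasFDerivAt K A x) {I : Set ℝ} (hI : IsOpen I)
    {u : ℝ → V3 → V3} (hu : ContDiffOn ℝ 2 (Function.uncurry u) (I ×ˢ Set.univ))
    (huK : ∀ s ∈ I, ∀ x, bracket3 K (u s) x = 0) {t : ℝ} (ht : t ∈ I) (x : V3) :
    bracket3 K (fun y => deriv (fun s => u s y) t) x = 0 := by
  set D2 := fderiv ℝ (fderiv ℝ (Function.uncurry u)) (t, x)
  have hmixed : HasDerivAt (fun s => fderiv ℝ (Function.uncurry u) (s, x) (0, K x))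
      (D2 (1, 0) (0, K x)) t :=
    ((apply ℝ V3 ((0 : ℝ), K x)).hasFDerivAt.comp (t, x)
      (hu.hasFDerivAt_fderiv_uncurry hI ht x)).hasDerivAt_prodMk_const
  have hrot : HasDerivAt (fun s => A (u s x))
      (A (fderiv ℝ (Function.uncurry u) (t, x) (1, 0))) t :=
    A.hasFDerivAt.comp_hasDerivAt t (hu.hasDerivAt_slice hI ht x)
  have hslice : (fun s => fderiv ℝ (Function.uncurry u) (s, x) (0, K x)) =ᶠ[nhds t]
      fun s => A (u s x) :=
    Filter.eventuallyEq_of_mem (hI.mem_nhds ht) fun s hs => by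
      rw [← hu.fderiv_slice_apply hI hs, (bracket3_eq_zero_iff hK).1 (huK s hs x)]
  have hsymm : D2 (0, K x) (1, 0) = D2 (1, 0) (0, K x) :=
    ((hu.contDiffAt ((hI.prod isOpen_univ).mem_nhds ⟨ht, trivial⟩)).isSymmSndFDerivAt
      (by simp)).eq _ _
  rw [bracket3_eq_zero_iff hK, (hu.hasFDerivAt_deriv_slice hI ht x).fderiv,
    (hu.hasDerivAt_slice hI ht x).deriv]
  simp only [comp_apply, apply_apply, inr_apply]
  rw [hsymm]
  exact hmixed.unique (hrot.congr_of_eventuallyEq hslice)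

end AffineField

lemma dot3_grad3 (f : V3 → ℝ) (x v : V3) : dot3 (grad3 f x) v = fderiv ℝ f x v :=
  dot3_map_single_one _ v

lemma dot3_fderiv_grad3 {f : V3 → ℝ} {x : V3} (hf : ContDiffAt ℝ 2 f x) (v w : V3) :
    dot3 (fderiv ℝ (grad3 f) x v) w = fderiv ℝ (fderiv ℝ f) x v w := by
  have hDf : DifferentiableAt ℝ (fderiv ℝ f) x :=
    (hf.fderiv_right (m := 1) le_rfl).differentiableAt one_ne_zero
  have hgrad : HasFDerivAt (grad3 f)
      (pi fun i => (fderiv ℝ (fderiv ℝ f) x).flip (Pi.single i 1)) x :=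
    hasFDerivAt_pi.2 fun i => by
      simpa [grad3, pd] using
        hDf.hasFDerivAt.clm_apply (hasFDerivAt_const (Pi.single i 1 : V3) x)
  rw [hgrad.fderiv]
  exact dot3_map_single_one _ w

lemma hasFDerivAt_dot3_grad3 {f : V3 → ℝ} {K : V3 → V3} {U : Set V3} {x : V3}
    (hf : ContDiffAt ℝ 2 f x) (hK : DifferentiableAt ℝ K x) (hKill : IsKillingOn K U)
    (hx : x ∈ U) :
    HasFDerivAt (fun y => dot3 (grad3 f y) (K y)) (dot3CLM (bracket3 K (grad3 f) x)) x := by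
  have hDf : DifferentiableAt ℝ (fderiv ℝ f) x :=
    (hf.fderiv_right (m := 1) le_rfl).differentiableAt one_ne_zero
  have hφ : (fun y => dot3 (grad3 f y) (K y)) = fun y => fderiv ℝ f y (K y) :=
    funext fun y => dot3_grad3 f y (K y)
  rw [hφ]
  refine (hDf.hasFDerivAt.clm_apply hK.hasFDerivAt).congr_fderiv ?_
  ext v
  have hsymm := (hf.isSymmSndFDerivAt (by simp)).eq (K x) v
  have hanti := hKill x hx (grad3 f x) v
  rw [dot3_grad3] at hanti
  simp only [dot3CLM_apply, bracket3, add_apply, comp_apply, flip_apply]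
  rw [dot3_sub_left, dot3_fderiv_grad3 hf, hsymm]
  linarith

lemma dot3_grad3_eq_of_bracket3_eq_zero {f : V3 → ℝ} {K : V3 → V3} (hf : ContDiff ℝ 2 f)
    (hK : Differentiable ℝ K) (hKill : IsKillingOn K Set.univ)
    (hbr : ∀ x, bracket3 K (grad3 f) x = 0) (x y : V3) :
    dot3 (grad3 f x) (K x) = dot3 (grad3 f y) (K y) := by
  have hderiv : ∀ z, HasFDerivAt (fun y => dot3 (grad3 f y) (K y)) 0 z := fun z => by
    convert hasFDerivAt_dot3_grad3 hf.contDiffAt (hK z) hKill trivial using 1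
    ext v
    simp [hbr z, dot3]
  exact is_const_of_fderiv_eq_zero (fun z => (hderiv z).differentiableAt)
    (fun z => (hderiv z).fderiv) x y

theorem pressure_gradient_swirl_constant_general (I : Set ℝ) (hIopen : IsOpen I)
    (K : V3 → V3) (hKsmooth : ContDiff ℝ (⊤ : ℕ∞) K)
    (hKill : IsKillingOn K Set.univ)
    (u : ℝ → V3 → V3) (p : ℝ → V3 → ℝ)
    (hu : ContDiffOn ℝ (⊤ : ℕ∞) (fun q : ℝ × V3 => u q.1 q.2) (I ×ˢ (Set.univ : Set V3)))
    (hp : ContDiffOn ℝ (⊤ : ℕ∞) (fun q : ℝ × V3 => p q.1 q.2) (I ×ˢ (Set.univ : Set V3)))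
    (heuler : IsEulerSolution I u p)
    (haxi : ∀ t ∈ I, ∀ x : V3, bracket3 K (u t) x = 0) :
    ∀ t ∈ I, ∀ x y : V3,
      dot3 (grad3 (p t) x) (K x) = dot3 (grad3 (p t) y) (K y) := by
  intro t ht
  have h2 : (2 : WithTop ℕ∞) ≤ ((⊤ : ℕ∞) : WithTop ℕ∞) := WithTop.coe_le_coe.2 le_top
  have hK2 : ContDiff ℝ 2 K := hKsmooth.of_le h2
  have hu2 : ContDiffOn ℝ 2 (Function.uncurry u) (I ×ˢ Set.univ) := hu.of_le h2
  have hut : ContDiff ℝ 2 (u t) := hu2.contDiff_slice ht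
  have hKaffine := hKill.hasFDerivAt_fderiv_zero hK2
  have hgrad : grad3 (p t) =
      fun x => -(deriv (fun s => u s x) t + fderiv ℝ (u t) x (u t x)) :=
    funext fun x => (neg_eq_iff_eq_neg.2 (heuler.1 t ht x)).symm
  have hbracket : ∀ x, bracket3 K (grad3 (p t)) x = 0 := fun x => by
    have htransport : DifferentiableAt ℝ (fun y => fderiv ℝ (u t) y (u t y)) x :=
      ((hut.fderiv_right (m := 1) le_rfl).differentiable one_ne_zero x).clm_apply
        (hut.differentiable two_ne_zero x)
    rw [hgrad, bracket3_neg,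
      bracket3_add (hu2.hasFDerivAt_deriv_slice hIopen ht x).differentiableAt htransport,
      bracket3_deriv_eq_zero hKaffine hIopen hu2 haxi ht x,
      bracket3_fderiv_apply_eq_zero hKaffine hut (hut.differentiable two_ne_zero) (haxi t ht)
        (haxi t ht) x]
    simp
  exact dot3_grad3_eq_of_bracket3_eq_zero ((hp.of_le h2).contDiff_slice ht)
    (hK2.differentiable two_ne_zero) hKill hbracket

/-- for a Killing field K and a smooth axisymmetric Euler solution (u,p)
(i.e. [K, u(t,·)] = 0), for each time t the function x ↦ ⟨∇ₓp(t,x), K(x)⟩ is constant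
on ℝ³. -/
theorem pressure_gradient_swirl_constant (I : Set ℝ) (hIopen : IsOpen I) (hI0 : (0:ℝ) ∈ I)
    (hIconn : I.OrdConnected)
    (K : V3 → V3) (hKsmooth : ContDiff ℝ (⊤ : ℕ∞) K)
    (hKill : IsKillingOn K Set.univ)
    (u : ℝ → V3 → V3) (p : ℝ → V3 → ℝ)
    (hu : ContDiffOn ℝ (⊤ : ℕ∞) (fun q : ℝ × V3 => u q.1 q.2) (I ×ˢ (Set.univ : Set V3)))
    (hp : ContDiffOn ℝ (⊤ : ℕ∞) (fun q : ℝ × V3 => p q.1 q.2) (I ×ˢ (Set.univ : Set V3)))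
    (heuler : IsEulerSolution I u p)
    (haxi : ∀ t ∈ I, ∀ x : V3, bracket3 K (u t) x = 0) :
    ∀ t ∈ I, ∀ x y : V3,
      dot3 (grad3 (p t) x) (K x) = dot3 (grad3 (p t) y) (K y) :=
  pressure_gradient_swirl_constant_general I hIopen K hKsmooth hKill u p hu hp heuler haxi
end
end

section
/- Let K be a nowhere-vanishing Killing field on an open set U ⊆ ℝ³ and let v be a smooth vector field on U with [K, v] = 0 and ⟨v, K⟩ = 0 at every point of U. Then curl v is everywhere parallel to K: (curl v)(x) × K(x) = 0 for all x ∈ U; equivalently, curl v = φ_v K where φ_v = ⟨curl v, K⟩/|K|². -/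
/-! At a point `x` write `A = DK(x)`, `B = Dv(x)`, `k = K(x)`, `w = v(x)`. The bracket condition
says `B k = A w`; differentiating `⟨v, K⟩ = 0` gives `⟨B e, k⟩ + ⟨w, A e⟩ = 0`, and antisymmetry of
`A` turns this into `⟨B k, e⟩ = ⟨k, B e⟩`, i.e. `(B - Bᵀ) k = 0`. Since `(B - Bᵀ) k = curl v × k`,
the curl is parallel to `k`, and the coefficient comes from `(c × k) × k = ⟨c, k⟩ k - |k|² c`. -/

noncomputable section

open Matrix Filter Topology

lemma dot3_eq_dotProduct (u w : V3) : dot3 u w = u ⬝ᵥ w := rfl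

lemma cross3_eq_crossProduct (u w : V3) : cross3 u w = u ⨯₃ w := rfl

lemma eq_smul_of_cross3_eq_zero {c k : V3} (hck : cross3 c k = 0) (hk : k ≠ 0) :
    c = (dot3 c k / dot3 k k) • k := by
  have hkk : k ⬝ᵥ k ≠ 0 := dotProduct_self_eq_zero.not.mpr hk
  have htriple := cross_cross_eq_smul_sub_smul c k k
  rw [← cross3_eq_crossProduct c k, hck, map_zero, LinearMap.zero_apply, eq_comm,
    sub_eq_zero] at htriple
  rw [dot3_eq_dotProduct, dot3_eq_dotProduct, div_eq_inv_mul, mul_smul, htriple,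
    inv_smul_smul₀ hkk]

/-- The axial vector of `B - Bᵀ`: `(B - Bᵀ) u = axial3 B × u`, and `curl3 v x = axial3 (Dv(x))`. -/
def axial3 (B : V3 →L[ℝ] V3) : V3 :=
  ![B (Pi.single 1 1) 2 - B (Pi.single 2 1) 1,
    B (Pi.single 2 1) 0 - B (Pi.single 0 1) 2,
    B (Pi.single 0 1) 1 - B (Pi.single 1 1) 0]

lemma curl3_eq_axial3_fderiv {v : V3 → V3} {x : V3} (hv : DifferentiableAt ℝ v x) :
    curl3 v x = axial3 (fderiv ℝ v x) := by
  simp [curl3, axial3, pd, fderiv_apply hv]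

lemma clm_apply_eq_sum_single {ι M : Type*} [Fintype ι] [DecidableEq ι] [AddCommGroup M]
    [Module ℝ M] [TopologicalSpace M] (B : (ι → ℝ) →L[ℝ] M) (u : ι → ℝ) :
    B u = ∑ i, u i • B (Pi.single i 1) := by
  conv_lhs => rw [pi_eq_sum_univ' u, map_sum]
  simp only [map_smul]

lemma dot3_cross3_axial3 (B : V3 →L[ℝ] V3) (u w : V3) :
    dot3 (cross3 (axial3 B) u) w = dot3 (B u) w - dot3 u (B w) := by
  rw [clm_apply_eq_sum_single B u, clm_apply_eq_sum_single B w]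
  simp only [dot3, cross3, axial3, cons_val_one, cons_val_zero, cons_val, Fin.sum_univ_three,
    Finset.sum_apply, Pi.smul_apply, smul_eq_mul]
  ring

lemma cross3_axial3_eq_zero {B : V3 →L[ℝ] V3} {u : V3}
    (hsymm : ∀ w, dot3 (B u) w = dot3 u (B w)) : cross3 (axial3 B) u = 0 := by
  have h := dot3_cross3_axial3 B u (cross3 (axial3 B) u)
  rwa [hsymm, sub_self, dot3_eq_dotProduct, dotProduct_self_eq_zero] at h

lemma fderiv_dot3_apply {f g : V3 → V3} {x : V3} (hf : DifferentiableAt ℝ f x)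
    (hg : DifferentiableAt ℝ g x) (e : V3) :
    fderiv ℝ (fun y => dot3 (f y) (g y)) x e
      = dot3 (fderiv ℝ f x e) (g x) + dot3 (f x) (fderiv ℝ g x e) := by
  have hsum := HasFDerivAt.fun_sum (u := Finset.univ) fun i _ =>
    (hasFDerivAt_pi'.1 hf.hasFDerivAt i).fun_mul (hasFDerivAt_pi'.1 hg.hasFDerivAt i)
  simp only [dot3]
  rw [hsum.fderiv]
  simp only [Finset.sum_add_distrib, _root_.add_apply, _root_.sum_apply,
    _root_.smul_apply, ContinuousLinearMap.comp_apply, ContinuousLinearMap.proj_apply,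
    smul_eq_mul, mul_comm]
  ring

lemma dot3_apply_eq_dot3_apply_of_antisymm {A B : V3 →L[ℝ] V3} {k w : V3}
    (hA : ∀ a b, dot3 (A a) b + dot3 a (A b) = 0) (hbracket : B k = A w)
    (horth : ∀ e, dot3 (B e) k + dot3 w (A e) = 0) (e : V3) :
    dot3 (B k) e = dot3 k (B e) := by
  rw [hbracket]
  have hcomm : dot3 k (B e) = dot3 (B e) k := dotProduct_comm _ _
  linarith [hA w e, horth e]

/-- if K is a nowhere-vanishing Killing field on an open set U and v is a
smooth axisymmetric ([K,v] = 0) swirl-free (⟨v,K⟩ = 0) field on U, then curl v is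
everywhere parallel to K: (curl v) × K = 0, i.e. curl v = (⟨curl v, K⟩/|K|²) K. -/
theorem curl_of_swirlfree_parallel_to_K (U : Set V3) (hU : IsOpen U)
    (K v : V3 → V3)
    (hKsmooth : ContDiffOn ℝ (⊤ : ℕ∞) K U) (hKill : IsKillingOn K U)
    (hKne : ∀ x ∈ U, K x ≠ 0)
    (hvsmooth : ContDiffOn ℝ (⊤ : ℕ∞) v U)
    (haxi : ∀ x ∈ U, bracket3 K v x = 0)
    (hswirl : ∀ x ∈ U, dot3 (v x) (K x) = 0) :
    ∀ x ∈ U, cross3 (curl3 v x) (K x) = 0 ∧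
      curl3 v x = (dot3 (curl3 v x) (K x) / dot3 (K x) (K x)) • K x := by
  intro x hx
  have hUx : U ∈ 𝓝 x := hU.mem_nhds hx
  have hKx : DifferentiableAt ℝ K x := (hKsmooth.contDiffAt hUx).differentiableAt (by simp)
  have hvx : DifferentiableAt ℝ v x := (hvsmooth.contDiffAt hUx).differentiableAt (by simp)
  have hbracket : fderiv ℝ v x (K x) = fderiv ℝ K x (v x) := sub_eq_zero.mp (haxi x hx)
  have horth (e : V3) : dot3 (fderiv ℝ v x e) (K x) + dot3 (v x) (fderiv ℝ K x e) = 0 := by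
    rw [← fderiv_dot3_apply hvx hKx,
      (eventuallyEq_of_mem hUx hswirl : _ =ᶠ[𝓝 x] fun _ => (0 : ℝ)).fderiv_eq]
    simp
  have hcross : cross3 (curl3 v x) (K x) = 0 := by
    rw [curl3_eq_axial3_fderiv hvx]
    exact cross3_axial3_eq_zero (dot3_apply_eq_dot3_apply_of_antisymm (hKill x hx) hbracket horth)
  exact ⟨hcross, eq_smul_of_cross3_eq_zero hcross (hKne x hx)⟩
end
end
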